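/- arXiv:2604.21813 — 6 statements merged into one kernel-verified Lean document; each statement's English description precedes it below -/
import Mathlib

section
/- Let X be a Polish space, let f : X → X be a Borel-measurable function, and let G = (X, E) be the graph generated by f, i.e. E = {(v,w) : v ≠ w and (f(v) = w or f(w) = v)}. If G admits a proper coloring with finitely many colors all of whose color classes are Borel, then G admits a proper coloring with at most 3 colors all of whose color classes are Borel. (In particular, the Borel chromatic number of a graph generated by a single Borel function is either at most 3 or infinite.) -/
/-!
Let `c` be a finite Borel coloring that is proper for the graph of `f`. Along every forward
orbit of a non-fixed point the colors `c (f^[n] x)` change at each step, so the sequence has a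
strict local maximum; the set `B` of fixed points and of points `x` at which `c` peaks at `f x`
is therefore met by every forward orbit, it is Borel, and no edge joins two of its points.
Coloring `B` with a third color and every other point by the parity of its entry time into `B`
gives a Borel proper 3-coloring.
-/

open MeasureTheory Function

theorem exists_lt_succ_gt_succ_of_succ_ne {α : Type*} [LinearOrder α] [Finite α] (g : ℕ → α)
    (hg : ∀ n, g n ≠ g (n + 1)) : ∃ n, g n < g (n + 1) ∧ g (n + 2) < g (n + 1) := by
  by_contra! hpeak
  obtain ⟨n₀, hn₀⟩ : ∃ n, g n < g (n + 1) := by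
    by_contra! hdesc
    exact not_injective_infinite_finite g
      (strictAnti_nat_of_succ_lt fun n => (hdesc n).lt_of_ne' (hg n)).injective
  have hasc : ∀ j, g (n₀ + j) < g (n₀ + j + 1) := by
    intro j
    induction j with
    | zero => exact hn₀
    | succ j ih => exact (hpeak _ ih).lt_of_ne (hg _)
  exact not_injective_infinite_finite _ (strictMono_nat_of_lt_succ hasc).injective

section EntryTime

open scoped Classical

variable {X : Type*} {f : X → X} {B : Set X}

noncomputable def entryTime (hB : ∀ x, ∃ n, f^[n] x ∈ B) (x : X) : ℕ :=
  Nat.find (hB x)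

theorem entryTime_eq_succ_of_notMem (hB : ∀ x, ∃ n, f^[n] x ∈ B) {x : X} (hx : x ∉ B) :
    entryTime hB x = entryTime hB (f x) + 1 :=
  Nat.find_comp_succ (hB x) (hB (f x)) hx

theorem measurable_entryTime [MeasurableSpace X] (hf : Measurable f) (hBm : MeasurableSet B)
    (hB : ∀ x, ∃ n, f^[n] x ∈ B) : Measurable (entryTime hB) :=
  measurable_find hB fun n => hf.iterate n hBm

theorem exists_measurable_fin_three_coloring [MeasurableSpace X] (hf : Measurable f)
    (hBm : MeasurableSet B) (hB : ∀ x, ∃ n, f^[n] x ∈ B) (hind : ∀ x ∈ B, f x ∈ B → f x = x) :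
    ∃ c : X → Fin 3, Measurable c ∧ ∀ x, f x ≠ x → c x ≠ c (f x) := by
  refine ⟨fun x => if x ∈ B then 2 else if Even (entryTime hB x) then 0 else 1,
    Measurable.ite hBm measurable_const <|
      Measurable.ite (measurable_entryTime hf hBm hB (.of_discrete (s := {n | Even n})))
        measurable_const measurable_const, fun x hx => ?_⟩
  by_cases hxB : x ∈ B <;> by_cases hfxB : f x ∈ B
  · exact absurd (hind x hxB hfxB) hx
  all_goals simp only [hxB, hfxB, if_true, if_false]
  · split_ifs <;> decide
  · split_ifs <;> decide
  · simp only [entryTime_eq_succ_of_notMem hB hxB, Nat.even_add_one]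
    split_ifs <;> simp_all

end EntryTime

section PeakSet

variable {X α : Type*} [LinearOrder α] {f : X → X} {c : X → α}

variable (f c) in
def peakSet : Set X :=
  {x | f x = x ∨ c x < c (f x) ∧ c (f (f x)) < c (f x)}

theorem apply_eq_self_of_mem_peakSet {x : X} (hx : x ∈ peakSet f c) (hfx : f x ∈ peakSet f c) :
    f x = x := by
  obtain hx | ⟨hlt, hgt⟩ := hx
  · exact hx
  obtain hfx | ⟨hlt', -⟩ := hfx
  · rw [hfx] at hgt
    exact absurd hgt (lt_irrefl _)
  · exact absurd hlt' hgt.not_gt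

theorem exists_iterate_mem_peakSet [Finite α] (hc : ∀ x, f x ≠ x → c x ≠ c (f x)) (x : X) :
    ∃ n, f^[n] x ∈ peakSet f c := by
  by_cases hfix : ∃ n, f (f^[n] x) = f^[n] x
  · obtain ⟨n, hn⟩ := hfix
    exact ⟨n, Or.inl hn⟩
  push Not at hfix
  obtain ⟨n, hlt, hgt⟩ := exists_lt_succ_gt_succ_of_succ_ne (fun n => c (f^[n] x)) fun n => by
    simpa only [iterate_succ_apply'] using hc _ (hfix n)
  refine ⟨n, Or.inr ?_⟩
  simpa only [iterate_succ_apply'] using And.intro hlt hgt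

theorem measurableSet_peakSet [MeasurableSpace X] [MeasurableSpace α] [Countable α]
    [MeasurableSingletonClass α] (hf : Measurable f) (hcm : Measurable c)
    (hc : ∀ x, f x ≠ x → c x ≠ c (f x)) : MeasurableSet (peakSet f c) := by
  have hcolors : Measurable fun x => (c x, c (f x), c (f (f x))) :=
    hcm.prodMk ((hcm.comp hf).prodMk (hcm.comp (hf.comp hf)))
  -- A proper coloring detects fixed points: `f x = x ↔ c x = c (f x)`.
  have hpeak : peakSet f c = (fun x => (c x, c (f x), c (f (f x)))) ⁻¹'
      {t | t.1 = t.2.1 ∨ t.1 < t.2.1 ∧ t.2.2 < t.2.1} := by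
    ext x
    simp only [peakSet, Set.mem_ofPred_eq, Set.mem_preimage]
    rw [← show f x = x ↔ c x = c (f x) from ⟨fun h => congrArg c h.symm, not_imp_not.mp (hc x)⟩]
  rw [hpeak]
  exact hcolors (Set.to_countable _).measurableSet

end PeakSet

theorem borel_chromatic_of_single_function_general
    {X : Type*}
    [MeasurableSpace X]
    (f : X → X) (hf : Measurable f)
    (E : Set (X × X))
    (hE : E = {p : X × X | p.1 ≠ p.2 ∧ (f p.1 = p.2 ∨ f p.2 = p.1)})
    (h : ∃ (k : ℕ) (c : X → Fin k),
      (∀ v w, (v, w) ∈ E → c v ≠ c w) ∧ ∀ a, MeasurableSet (c ⁻¹' {a})) :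
    ∃ c : X → Fin 3,
      (∀ v w, (v, w) ∈ E → c v ≠ c w) ∧ ∀ a, MeasurableSet (c ⁻¹' {a}) := by
  obtain ⟨k, c, hcE, hcm⟩ := h
  have hc : ∀ x, f x ≠ x → c x ≠ c (f x) := fun x hx => hcE x (f x) (hE ▸ ⟨hx.symm, Or.inl rfl⟩)
  obtain ⟨d, hdm, hd⟩ := exists_measurable_fin_three_coloring hf
    (measurableSet_peakSet hf (measurable_to_countable' hcm) hc) (exists_iterate_mem_peakSet hc)
    fun x => apply_eq_self_of_mem_peakSet
  refine ⟨d, ?_, fun a => hdm (measurableSet_singleton a)⟩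
  intro v w hvw
  obtain ⟨hne, rfl | rfl⟩ : v ≠ w ∧ (f v = w ∨ f w = v) := by rwa [hE] at hvw
  · exact hd v hne.symm
  · exact (hd w hne).symm

/-- The Borel chromatic number of a graph generated by a single Borel function
is at most 3 if it is finite. -/
theorem borel_chromatic_of_single_function
    {X : Type*} [TopologicalSpace X] [PolishSpace X]
    [MeasurableSpace X] [BorelSpace X]
    (f : X → X) (hf : Measurable f)
    (E : Set (X × X))
    (hE : E = {p : X × X | p.1 ≠ p.2 ∧ (f p.1 = p.2 ∨ f p.2 = p.1)})
    (h : ∃ (k : ℕ) (c : X → Fin k),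
      (∀ v w, (v, w) ∈ E → c v ≠ c w) ∧ ∀ a, MeasurableSet (c ⁻¹' {a})) :
    ∃ c : X → Fin 3,
      (∀ v w, (v, w) ∈ E → c v ≠ c w) ∧ ∀ a, MeasurableSet (c ⁻¹' {a}) :=
  borel_chromatic_of_single_function_general f hf E hE h
end

section
/- For every n ≥ 2, the shift graph G_n on the space of sequences ℕ → Fin n admits a proper coloring with 3 colors all of whose color classes are Borel; that is, the Borel chromatic number of G_n is at most 3. -/
open MeasureTheory

namespace ShiftColoring

variable {n : ℕ}

/-- The left shift. -/
def sft (x : ℕ → Fin n) : ℕ → Fin n := fun k => x (k + 1)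

lemma sft_iter (i : ℕ) (x : ℕ → Fin n) (k : ℕ) : (sft^[i] x) k = x (k + i) := by
  induction i generalizing x k with
  | zero => rfl
  | succ m ih =>
    rw [Function.iterate_succ_apply, ih]
    rfl

def isConst (x : ℕ → Fin n) : Prop := ∀ k, x k = x 0

def evC (x : ℕ → Fin n) : Prop := ∃ N, ∀ k, x (N + k) = x N

def Bset (x : ℕ → Fin n) : Prop := isConst x ∨ (¬ evC x ∧ x 0 < x 1)

lemma isConst_sft_self {x : ℕ → Fin n} (h : isConst x) : sft x = x :=
  funext fun k => (h (k + 1)).trans (h k).symm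

lemma evC_of_isConst_iter {x : ℕ → Fin n} {i : ℕ} (h : isConst (sft^[i] x)) : evC x := by
  refine ⟨i, fun k => ?_⟩
  have h1 := h k
  rw [sft_iter, sft_iter] at h1
  rw [Nat.add_comm i k]
  rw [h1, Nat.zero_add]

lemma evC_of_iter {x : ℕ → Fin n} {i : ℕ} (h : evC (sft^[i] x)) : evC x := by
  obtain ⟨N, hN⟩ := h
  refine ⟨N + i, fun k => ?_⟩
  have h1 := hN k
  rw [sft_iter, sft_iter] at h1
  have h2 : N + i + k = N + k + i := by omega
  rw [h2, h1]

/-- Every forward orbit hits `Bset`. -/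
lemma exists_hit (x : ℕ → Fin n) : {i | Bset (sft^[i] x)}.Nonempty := by
  by_cases h : evC x
  · obtain ⟨N, hN⟩ := h
    refine ⟨N, Or.inl fun k => ?_⟩
    rw [sft_iter, sft_iter, Nat.zero_add, Nat.add_comm k N]
    rw [hN k]
  · have hinc : ∃ k, x k < x (k + 1) := by
      by_contra hc
      push_neg at hc
      have anti : ∀ j k, j ≤ k → x k ≤ x j := by
        intro j k hjk
        induction k with
        | zero =>
          have hj0 : j = 0 := Nat.le_zero.mp hjk
          rw [hj0]
        | succ m ih =>
          rcases Nat.eq_or_lt_of_le hjk with he | hlt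
          · rw [he]
          · exact le_trans (hc m) (ih (by omega))
      have hmem : sInf (Set.range fun k => (x k : ℕ)) ∈ Set.range fun k => (x k : ℕ) :=
        Nat.sInf_mem ⟨(x 0 : ℕ), ⟨0, rfl⟩⟩
      obtain ⟨N, hN⟩ := hmem
      apply h
      refine ⟨N, fun k => ?_⟩
      have h1 : x (N + k) ≤ x N := anti N (N + k) (Nat.le_add_right N k)
      have h2 : (x N : ℕ) ≤ (x (N + k) : ℕ) := by
        have hN' : (x N : ℕ) = sInf (Set.range fun k => (x k : ℕ)) := hN
        rw [hN']; exact Nat.sInf_le ⟨N + k, rfl⟩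
      exact le_antisymm h1 (Fin.le_def.mpr h2)
    obtain ⟨k, hk⟩ := hinc
    refine ⟨k, Or.inr ⟨fun hec => h (evC_of_iter hec), ?_⟩⟩
    show (sft^[k] x) 0 < (sft^[k] x) 1
    rw [sft_iter, sft_iter, Nat.zero_add, Nat.add_comm 1 k]
    exact hk

/-- A non-eventually-constant orbit leaves `Bset`. -/
lemma exists_leave {x : ℕ → Fin n} (h : ¬ evC x) :
    {i | 0 < i ∧ ¬ Bset (sft^[i] x)}.Nonempty := by
  by_contra hc
  rw [Set.not_nonempty_iff_eq_empty, Set.eq_empty_iff_forall_notMem] at hc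
  have key : ∀ i, 0 < i → x i < x (i + 1) := by
    intro i hi
    have h1 : Bset (sft^[i] x) := by
      by_contra hb
      exact hc i ⟨hi, hb⟩
    rcases h1 with hco | ⟨_, hlt⟩
    · exact absurd (evC_of_isConst_iter hco) h
    · rw [sft_iter, sft_iter, Nat.zero_add, Nat.add_comm 1 i] at hlt
      exact hlt
  have grow : ∀ k, k ≤ (x (k + 1) : ℕ) := by
    intro k
    induction k with
    | zero => exact Nat.zero_le _
    | succ m ih =>
      have h1 : (x (m + 1) : ℕ) < (x (m + 1 + 1) : ℕ) :=
        Fin.lt_def.mp (key (m + 1) (Nat.succ_pos m))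
      omega
  have h1 := grow n
  have h2 := (x (n + 1)).isLt
  omega

noncomputable def tfun (x : ℕ → Fin n) : ℕ := sInf {i | Bset (sft^[i] x)}

noncomputable def rfun (x : ℕ → Fin n) : ℕ := sInf {i | 0 < i ∧ ¬ Bset (sft^[i] x)}

open Classical in
noncomputable def col (x : ℕ → Fin n) : Fin 3 :=
  if Bset x then (if rfun x % 2 = 1 then 2 else 0)
  else (if tfun x % 2 = 1 then 1 else 0)

lemma col_sft (x : ℕ → Fin n) (hx : sft x ≠ x) : col x ≠ col (sft x) := by
  classical
  have hiter : ∀ i : ℕ, (sft^[i] (sft x)) = sft^[i + 1] x := by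
    intro i
    rw [Function.iterate_succ_apply]
  by_cases hB : Bset x
  · rcases hB with hc | ⟨hev, hlt⟩
    · exact absurd (isConst_sft_self hc) hx
    · have hBx : Bset x := Or.inr ⟨hev, hlt⟩
      have hne := exists_leave hev
      have hrm : 0 < rfun x ∧ ¬ Bset (sft^[rfun x] x) := Nat.sInf_mem hne
      obtain ⟨hr1, hr2⟩ := hrm
      rcases Nat.eq_or_lt_of_le hr1 with h1 | h2
      · -- rfun x = 1, next point not in B
        have hnB : ¬ Bset (sft x) := by
          have hq : rfun x = 1 := by omega
          have hw := hr2
          rw [hq] at hw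
          rwa [Function.iterate_one] at hw
        unfold col
        rw [if_pos hBx, if_neg hnB]
        split_ifs <;> first | decide | (exfalso; omega)
      · -- rfun x ≥ 2, next point in B, rfun decreases by 1
        have hB1 : Bset (sft x) := by
          by_contra hnb
          have hm : rfun x ≤ 1 := Nat.sInf_le (show 0 < 1 ∧ ¬ Bset (sft^[1] x) from
            ⟨Nat.one_pos, by rw [Function.iterate_one]; exact hnb⟩)
          omega
        have hmem2 : (rfun x - 1) ∈ {i | 0 < i ∧ ¬ Bset (sft^[i] (sft x))} := by
          refine ⟨by omega, ?_⟩
          rw [hiter, show rfun x - 1 + 1 = rfun x from by omega]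
          exact hr2
        have hle : rfun (sft x) ≤ rfun x - 1 := Nat.sInf_le hmem2
        have hmem3 : 0 < rfun (sft x) ∧ ¬ Bset (sft^[rfun (sft x)] (sft x)) :=
          Nat.sInf_mem ⟨rfun x - 1, hmem2⟩
        have h6 : rfun x ≤ rfun (sft x) + 1 := Nat.sInf_le
          (show 0 < rfun (sft x) + 1 ∧ ¬ Bset (sft^[rfun (sft x) + 1] x) from
            ⟨Nat.succ_pos _, by rw [← hiter]; exact hmem3.2⟩)
        unfold col
        rw [if_pos hBx, if_pos hB1]
        split_ifs <;> first | decide | (exfalso; omega)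
  · -- x not in B
    have hne := exists_hit x
    have htmem : Bset (sft^[tfun x] x) := Nat.sInf_mem hne
    have htpos : tfun x ≠ 0 := by
      intro he
      rw [he] at htmem
      exact hB htmem
    have hmemA : (tfun x - 1) ∈ {i | Bset (sft^[i] (sft x))} := by
      show Bset (sft^[tfun x - 1] (sft x))
      rw [hiter, show tfun x - 1 + 1 = tfun x from by omega]
      exact htmem
    have hA : tfun (sft x) ≤ tfun x - 1 := Nat.sInf_le hmemA
    have hmem4 : Bset (sft^[tfun (sft x)] (sft x)) := Nat.sInf_mem ⟨tfun x - 1, hmemA⟩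
    have hBk : tfun x ≤ tfun (sft x) + 1 := Nat.sInf_le
      (show Bset (sft^[tfun (sft x) + 1] x) from by rw [← hiter]; exact hmem4)
    have hshift : tfun x = tfun (sft x) + 1 := by omega
    by_cases hB1 : Bset (sft x)
    · have ht1 : tfun (sft x) ≤ 0 := Nat.sInf_le (show Bset (sft^[0] (sft x)) from hB1)
      unfold col
      rw [if_neg hB, if_pos hB1]
      split_ifs <;> first | decide | (exfalso; omega)
    · unfold col
      rw [if_neg hB, if_neg hB1]
      split_ifs <;> first | decide | (exfalso; omega)

/-! ### Measurability -/

lemma meas_pair (P : Fin n → Fin n → Prop) (j k : ℕ) :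
    MeasurableSet {x : ℕ → Fin n | P (x j) (x k)} := by
  have heq : {x : ℕ → Fin n | P (x j) (x k)} =
      ⋃ (a : Fin n), ⋃ (b : Fin n), ⋃ (_ : P a b),
        ({x : ℕ → Fin n | x j = a} ∩ {x : ℕ → Fin n | x k = b}) := by
    ext x
    simp only [Set.mem_iUnion, Set.mem_inter_iff, Set.mem_setOf_eq]
    constructor
    · intro h
      exact ⟨x j, x k, h, rfl, rfl⟩
    · rintro ⟨a, b, hab, h1, h2⟩
      rw [h1, h2]
      exact hab
  rw [heq]
  refine MeasurableSet.iUnion fun a => MeasurableSet.iUnion fun b =>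
    MeasurableSet.iUnion fun _ => MeasurableSet.inter ?_ ?_
  · exact (measurableSet_singleton a).preimage (measurable_pi_apply j)
  · exact (measurableSet_singleton b).preimage (measurable_pi_apply k)

lemma meas_isConst : MeasurableSet {x : ℕ → Fin n | isConst x} := by
  have heq : {x : ℕ → Fin n | isConst x} = ⋂ k, {x : ℕ → Fin n | x k = x 0} := by
    ext x
    simp only [Set.mem_iInter, Set.mem_setOf_eq]
    rfl
  rw [heq]
  exact MeasurableSet.iInter fun k => meas_pair (· = ·) k 0

lemma meas_evC : MeasurableSet {x : ℕ → Fin n | evC x} := by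
  have heq : {x : ℕ → Fin n | evC x} =
      ⋃ N, ⋂ k, {x : ℕ → Fin n | x (N + k) = x N} := by
    ext x
    simp only [Set.mem_iUnion, Set.mem_iInter, Set.mem_setOf_eq]
    rfl
  rw [heq]
  exact MeasurableSet.iUnion fun N => MeasurableSet.iInter fun k =>
    meas_pair (· = ·) (N + k) N

lemma meas_Bset : MeasurableSet {x : ℕ → Fin n | Bset x} := by
  have heq : {x : ℕ → Fin n | Bset x} =
      {x : ℕ → Fin n | isConst x} ∪
        ({x : ℕ → Fin n | evC x}ᶜ ∩ {x : ℕ → Fin n | x 0 < x 1}) := by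
    ext x
    simp only [Set.mem_union, Set.mem_inter_iff, Set.mem_compl_iff, Set.mem_setOf_eq]
    rfl
  rw [heq]
  exact meas_isConst.union (meas_evC.compl.inter (meas_pair (· < ·) 0 1))

lemma measurable_sft : Measurable (sft (n := n)) :=
  measurable_pi_lambda _ fun k => measurable_pi_apply (k + 1)

lemma meas_Biter (i : ℕ) : MeasurableSet {x : ℕ → Fin n | Bset (sft^[i] x)} := by
  have heq : {x : ℕ → Fin n | Bset (sft^[i] x)} =
      sft^[i] ⁻¹' {x : ℕ → Fin n | Bset x} := rfl
  rw [heq]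
  exact (measurable_sft.iterate i) meas_Bset

lemma meas_sInfP {P : ℕ → (ℕ → Fin n) → Prop}
    (h : ∀ i, MeasurableSet {x : ℕ → Fin n | P i x}) :
    Measurable (fun x : ℕ → Fin n => sInf {i | P i x}) := by
  apply measurable_to_countable'
  intro m
  match m with
  | 0 =>
    have heq : (fun x : ℕ → Fin n => sInf {i | P i x}) ⁻¹' {0} =
        {x : ℕ → Fin n | P 0 x} ∪ ⋂ i, {x : ℕ → Fin n | P i x}ᶜ := by
      ext x
      simp only [Set.mem_preimage, Set.mem_singleton_iff, Set.mem_union,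
        Set.mem_iInter, Set.mem_compl_iff, Set.mem_setOf_eq]
      rw [Nat.sInf_eq_zero]
      constructor
      · rintro (h0 | hemp)
        · exact Or.inl h0
        · refine Or.inr fun i hi => ?_
          rw [Set.eq_empty_iff_forall_notMem] at hemp
          exact hemp i hi
      · rintro (h0 | hall)
        · exact Or.inl h0
        · refine Or.inr (Set.eq_empty_iff_forall_notMem.mpr fun i hi => hall i hi)
    rw [heq]
    exact (h 0).union (MeasurableSet.iInter fun i => (h i).compl)
  | m + 1 =>
    have heq : (fun x : ℕ → Fin n => sInf {i | P i x}) ⁻¹' {m + 1} =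
        {x : ℕ → Fin n | P (m + 1) x} ∩ ⋂ i, ⋂ (_ : i ≤ m), {x : ℕ → Fin n | P i x}ᶜ := by
      ext x
      simp only [Set.mem_preimage, Set.mem_singleton_iff, Set.mem_inter_iff,
        Set.mem_iInter, Set.mem_compl_iff, Set.mem_setOf_eq]
      constructor
      · intro hs
        have hne : {i | P i x}.Nonempty := by
          by_contra hemp
          rw [Set.not_nonempty_iff_eq_empty] at hemp
          rw [hemp, Nat.sInf_empty] at hs
          omega
        have hmem := Nat.sInf_mem hne
        rw [hs] at hmem
        refine ⟨hmem, fun i hi => ?_⟩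
        intro hPi
        have := Nat.sInf_le (show i ∈ {j | P j x} from hPi)
        omega
      · rintro ⟨hP, hlow⟩
        have hle : sInf {i | P i x} ≤ m + 1 := Nat.sInf_le hP
        have hne : {i | P i x}.Nonempty := ⟨m + 1, hP⟩
        have hmem := Nat.sInf_mem hne
        by_contra hne'
        have hlt : sInf {i | P i x} ≤ m := by omega
        exact hlow _ hlt hmem
    rw [heq]
    exact (h (m + 1)).inter (MeasurableSet.iInter fun i => MeasurableSet.iInter fun _ =>
      (h i).compl)

lemma meas_tfun : Measurable (tfun (n := n)) :=
  meas_sInfP fun i => meas_Biter i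

lemma meas_rfun : Measurable (rfun (n := n)) := by
  apply meas_sInfP (P := fun i x => 0 < i ∧ ¬ Bset (sft^[i] x))
  intro i
  have heq : {x : ℕ → Fin n | 0 < i ∧ ¬ Bset (sft^[i] x)} =
      {x : ℕ → Fin n | 0 < i} ∩ {x : ℕ → Fin n | Bset (sft^[i] x)}ᶜ := by
    ext x
    simp only [Set.mem_inter_iff, Set.mem_compl_iff, Set.mem_setOf_eq]
  rw [heq]
  exact (MeasurableSet.const _).inter (meas_Biter i).compl

lemma meas_col : Measurable (col (n := n)) := by
  classical
  have h1 : Measurable (fun x : ℕ → Fin n => if rfun x % 2 = 1 then (2 : Fin 3) else 0) :=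
    (measurable_from_top (f := fun m : ℕ => if m % 2 = 1 then (2 : Fin 3) else 0)).comp
      meas_rfun
  have h2 : Measurable (fun x : ℕ → Fin n => if tfun x % 2 = 1 then (1 : Fin 3) else 0) :=
    (measurable_from_top (f := fun m : ℕ => if m % 2 = 1 then (1 : Fin 3) else 0)).comp
      meas_tfun
  unfold col
  exact Measurable.ite meas_Bset h1 h2

end ShiftColoring

/-- For every `n ≥ 2`, the shift graph on `ℕ → Fin n` (generated by the left
shift) admits a proper colouring with 3 colours all of whose colour classes
are Borel. -/
theorem shift_graph_borel_three_coloring (n : ℕ) (hn : 2 ≤ n) :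
    ∃ c : (ℕ → Fin n) → Fin 3,
      (∀ x y : ℕ → Fin n,
        x ≠ y → ((fun k => x (k + 1)) = y ∨ (fun k => y (k + 1)) = x) →
          c x ≠ c y) ∧
      ∀ a, MeasurableSet (c ⁻¹' {a}) := by
  classical
  refine ⟨ShiftColoring.col, ?_, fun a => ShiftColoring.meas_col (measurableSet_singleton a)⟩
  intro x y hxy hadj
  rcases hadj with h | h
  · have h' : ShiftColoring.sft x = y := h
    have hs : ShiftColoring.sft x ≠ x := fun he => hxy (he.symm.trans h')
    have hcol := ShiftColoring.col_sft x hs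
    rwa [h'] at hcol
  · have h' : ShiftColoring.sft y = x := h
    have hs : ShiftColoring.sft y ≠ y := fun he => hxy (h'.symm.trans he)
    have hcol := ShiftColoring.col_sft y hs
    rw [h'] at hcol
    exact hcol.symm
end

section
/- Consider the binary shift graph G₂ on Cantor space 2^ω = ℕ → Bool, generated by the left shift s(x)(k) = x(k+1). Let A₀ be the set of sequences beginning with a finite odd number of zeroes (i.e. x(i) = 0 for all i < m and x(m) = 1 for some odd m), let A₁ be the set of sequences beginning with a finite odd number of ones, and let A₂ be the complement of A₀ ∪ A₁. Then A₀, A₁, A₂ are Borel, they partition 2^ω, and each of them is independent in G₂; hence they form a proper Borel 3-coloring of G₂. -/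
open MeasureTheory

private lemma uniq_first {x : ℕ → Bool} {b : Bool} {m n : ℕ}
    (h1 : ∀ i < m, x i = b) (h2 : x m ≠ b)
    (h3 : ∀ i < n, x i = b) (h4 : x n ≠ b) : m = n := by
  rcases lt_trichotomy m n with h | h | h
  · exact absurd (h3 m h) h2
  · exact h
  · exact absurd (h1 n h) h4

private lemma shift_step {x : ℕ → Bool} {b : Bool} {m n : ℕ}
    (hm : Odd m) (h1 : ∀ i < m, x i = b) (h2 : x m ≠ b)
    (hn : Odd n) (h3 : ∀ i < n, x (i + 1) = b) (h4 : x (n + 1) ≠ b) : False := by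
  have h0 : x 0 = b := h1 0 (by rcases hm with ⟨a, rfl⟩; omega)
  have h3' : ∀ i < n + 1, x i = b := by
    intro i hi
    cases i with
    | zero => exact h0
    | succ j => exact h3 j (by omega)
  have heq := uniq_first h1 h2 h3' h4
  rcases hm with ⟨a, rfl⟩; rcases hn with ⟨c, rfl⟩; omega

private lemma shift_fixed {x : ℕ → Bool}
    (hx : ¬ ∃ m, Odd m ∧ (∀ i < m, x i = false) ∧ x m = true)
    (hx' : ¬ ∃ m, Odd m ∧ (∀ i < m, x i = true) ∧ x m = false)
    (hy : ¬ ∃ m, Odd m ∧ (∀ i < m, x (i + 1) = false) ∧ x (m + 1) = true)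
    (hy' : ¬ ∃ m, Odd m ∧ (∀ i < m, x (i + 1) = true) ∧ x (m + 1) = false) :
    (fun k => x (k + 1)) = x := by
  by_cases hc : ∀ k, x k = x 0
  · funext k; rw [hc (k + 1), hc k]
  · push_neg at hc
    have hex : ∃ k, x k ≠ x 0 := hc
    have hm : x (Nat.find hex) ≠ x 0 := Nat.find_spec hex
    have hlt : ∀ i < Nat.find hex, x i = x 0 := by
      intro i hi
      have := Nat.find_min hex hi
      simpa using this
    set m := Nat.find hex with hmdef
    have hm1 : 1 ≤ m := by
      rcases Nat.eq_zero_or_pos m with h | h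
      · rw [h] at hm; exact absurd rfl hm
      · exact h
    have hmodd : ¬ Odd m := by
      intro hodd
      cases h0 : x 0 with
      | false =>
        exact hx ⟨m, hodd, fun i hi => (hlt i hi).trans h0,
          by revert hm; rw [h0]; cases x m <;> simp⟩
      | true =>
        exact hx' ⟨m, hodd, fun i hi => (hlt i hi).trans h0,
          by revert hm; rw [h0]; cases x m <;> simp⟩
    have hmo : Odd (m - 1) := by
      rcases Nat.even_or_odd m with he | ho
      · obtain ⟨a, ha⟩ := he; exact ⟨a - 1, by omega⟩
      · exact absurd ho hmodd
    have hsucc : m - 1 + 1 = m := by omega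
    cases h0 : x 0 with
    | false =>
      exact absurd ⟨m - 1, hmo, fun i hi => (hlt (i + 1) (by omega)).trans h0,
        by rw [hsucc]; revert hm; rw [h0]; cases x m <;> simp⟩ hy
    | true =>
      exact absurd ⟨m - 1, hmo, fun i hi => (hlt (i + 1) (by omega)).trans h0,
        by rw [hsucc]; revert hm; rw [h0]; cases x m <;> simp⟩ hy'

/-- The explicit Borel 3-colouring of the binary shift graph on Cantor space:
the sets of sequences starting with an odd number of zeroes, with an odd
number of ones, and the rest are Borel, partition Cantor space, and each is
independent in the shift graph. -/
theorem binary_shift_graph_explicit_coloring :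
    let s : (ℕ → Bool) → (ℕ → Bool) := fun x k => x (k + 1)
    let A₀ : Set (ℕ → Bool) :=
      {x | ∃ m, Odd m ∧ (∀ i < m, x i = false) ∧ x m = true}
    let A₁ : Set (ℕ → Bool) :=
      {x | ∃ m, Odd m ∧ (∀ i < m, x i = true) ∧ x m = false}
    let A₂ : Set (ℕ → Bool) := (A₀ ∪ A₁)ᶜ
    (MeasurableSet A₀ ∧ MeasurableSet A₁ ∧ MeasurableSet A₂) ∧
    (A₀ ∩ A₁ = ∅ ∧ A₀ ∩ A₂ = ∅ ∧ A₁ ∩ A₂ = ∅ ∧ A₀ ∪ A₁ ∪ A₂ = Set.univ) ∧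
    (∀ x ∈ A₀, ∀ y ∈ A₀, ¬(x ≠ y ∧ (s x = y ∨ s y = x))) ∧
    (∀ x ∈ A₁, ∀ y ∈ A₁, ¬(x ≠ y ∧ (s x = y ∨ s y = x))) ∧
    (∀ x ∈ A₂, ∀ y ∈ A₂, ¬(x ≠ y ∧ (s x = y ∨ s y = x))) := by
  intro s A₀ A₁ A₂
  -- measurability of the basic set for a fixed (m, b, c)
  have meas : ∀ (b c : Bool) (m : ℕ),
      MeasurableSet {x : ℕ → Bool | Odd m ∧ (∀ i < m, x i = b) ∧ x m = c} := by
    intro b c m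
    have : {x : ℕ → Bool | Odd m ∧ (∀ i < m, x i = b) ∧ x m = c}
        = {x : ℕ → Bool | Odd m} ∩
          ((⋂ i, ⋂ _ : i < m, {x : ℕ → Bool | x i = b}) ∩ {x : ℕ → Bool | x m = c}) := by
      ext x
      simp [Set.mem_iInter, Set.mem_setOf_eq, and_assoc]
    rw [this]
    refine (MeasurableSet.const _).inter (MeasurableSet.inter ?_ ?_)
    · exact MeasurableSet.iInter fun i => MeasurableSet.iInter fun _ =>
        show MeasurableSet ((fun x : ℕ → Bool => x i) ⁻¹' {b}) from
          measurable_pi_apply i (measurableSet_singleton b)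
    · exact show MeasurableSet ((fun x : ℕ → Bool => x m) ⁻¹' {c}) from
        measurable_pi_apply m (measurableSet_singleton c)
  have hA0 : MeasurableSet A₀ := by
    have : A₀ = ⋃ m, {x : ℕ → Bool | Odd m ∧ (∀ i < m, x i = false) ∧ x m = true} := by
      ext x; simp [A₀, Set.mem_iUnion, Set.mem_setOf_eq]
    rw [this]; exact MeasurableSet.iUnion fun m => meas false true m
  have hA1 : MeasurableSet A₁ := by
    have : A₁ = ⋃ m, {x : ℕ → Bool | Odd m ∧ (∀ i < m, x i = true) ∧ x m = false} := by
      ext x; simp [A₁, Set.mem_iUnion, Set.mem_setOf_eq]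
    rw [this]; exact MeasurableSet.iUnion fun m => meas true false m
  have hA2 : MeasurableSet A₂ := (hA0.union hA1).compl
  refine ⟨⟨hA0, hA1, hA2⟩, ⟨?_, ?_, ?_, ?_⟩, ?_, ?_, ?_⟩
  · -- A₀ ∩ A₁ = ∅
    ext x
    simp only [Set.mem_inter_iff, Set.mem_setOf_eq, Set.mem_empty_iff_false, iff_false,
      not_and]
    rintro ⟨m, hm, h1, _⟩ ⟨n, hn, h3, _⟩
    have hm1 : 0 < m := by rcases hm with ⟨a, rfl⟩; omega
    have hn1 : 0 < n := by rcases hn with ⟨a, rfl⟩; omega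
    have := (h1 0 hm1).symm.trans (h3 0 hn1)
    simp at this
  · -- A₀ ∩ A₂ = ∅
    ext x
    simp only [A₂, Set.mem_inter_iff, Set.mem_compl_iff, Set.mem_union,
      Set.mem_empty_iff_false, iff_false, not_and, not_not]
    exact fun h => Or.inl h
  · -- A₁ ∩ A₂ = ∅
    ext x
    simp only [A₂, Set.mem_inter_iff, Set.mem_compl_iff, Set.mem_union,
      Set.mem_empty_iff_false, iff_false, not_and, not_not]
    exact fun h => Or.inr h
  · -- union is univ
    simp only [A₂, Set.union_compl_self]
  · -- A₀ independent
    rintro x hx y hy ⟨hne, h | h⟩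
    · obtain ⟨m, hm, h1, h2⟩ := hx
      obtain ⟨n, hn, h3, h4⟩ := hy
      rw [← h] at h3 h4
      exact shift_step hm h1 (by simp [h2]) hn (fun i hi => h3 i hi)
        (by simpa using h4)
    · obtain ⟨m, hm, h1, h2⟩ := hy
      obtain ⟨n, hn, h3, h4⟩ := hx
      rw [← h] at h3 h4
      exact shift_step hm h1 (by simp [h2]) hn (fun i hi => h3 i hi)
        (by simpa using h4)
  · -- A₁ independent
    rintro x hx y hy ⟨hne, h | h⟩
    · obtain ⟨m, hm, h1, h2⟩ := hx
      obtain ⟨n, hn, h3, h4⟩ := hy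
      rw [← h] at h3 h4
      exact shift_step hm h1 (by simp [h2]) hn (fun i hi => h3 i hi)
        (by simpa using h4)
    · obtain ⟨m, hm, h1, h2⟩ := hy
      obtain ⟨n, hn, h3, h4⟩ := hx
      rw [← h] at h3 h4
      exact shift_step hm h1 (by simp [h2]) hn (fun i hi => h3 i hi)
        (by simpa using h4)
  · -- A₂ independent
    rintro x hx y hy ⟨hne, h | h⟩
    · simp only [A₂, Set.mem_compl_iff, Set.mem_union, Set.mem_setOf_eq, not_or] at hx hy
      rw [← h] at hy
      have := shift_fixed hx.1 hx.2 hy.1 hy.2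
      exact hne (this.symm.trans h)
    · simp only [A₂, Set.mem_compl_iff, Set.mem_union, Set.mem_setOf_eq, not_or] at hx hy
      rw [← h] at hx
      have := shift_fixed hy.1 hy.2 hx.1 hx.2
      exact hne (this.symm.trans h).symm
end

section
/- Let X be a Polish space, let f : X → X be Borel-measurable, let G = (X, E) be the graph generated by f, and let c : X → Fin k be a proper coloring of G all of whose color classes are Borel. Then the map φ : X → (ℕ → Fin k) defined by φ(x)(n) = c(f^[n](x)) (where f^[n] denotes the n-fold iterate of f) is Borel-measurable and is a graph homomorphism from G to the shift graph G_k: whenever (x, y) ∈ E, the pair (φ(x), φ(y)) is an edge of G_k. -/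
open MeasureTheory

/-- Given a Borel proper colouring `c : X → Fin k` of the graph generated by
a Borel function `f`, the map `x ↦ (c (f^[n] x))ₙ` is a Borel graph
homomorphism into the shift graph on `ℕ → Fin k`. -/
theorem coloring_gives_homomorphism_to_shift_graph
    {X : Type*} [TopologicalSpace X] [PolishSpace X]
    [MeasurableSpace X] [BorelSpace X]
    (f : X → X) (hf : Measurable f) (k : ℕ)
    (E : Set (X × X))
    (hE : E = {p : X × X | p.1 ≠ p.2 ∧ (f p.1 = p.2 ∨ f p.2 = p.1)})
    (c : X → Fin k) (hc : ∀ v w, (v, w) ∈ E → c v ≠ c w)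
    (hB : ∀ a, MeasurableSet (c ⁻¹' {a}))
    (φ : X → ℕ → Fin k) (hφ : φ = fun x n => c (f^[n] x)) :
    Measurable φ ∧
      ∀ x y, (x, y) ∈ E →
        (φ x ≠ φ y ∧
          ((fun n => φ x (n + 1)) = φ y ∨ (fun n => φ y (n + 1)) = φ x)) := by
  subst hφ hE
  have hcm : Measurable c := measurable_to_countable' hB
  constructor
  · exact measurable_pi_lambda _ fun n => hcm.comp (hf.iterate n)
  · rintro x y ⟨hne, hxy | hyx⟩
    · refine ⟨fun h => hc x y ⟨hne, Or.inl hxy⟩ ?_, Or.inl ?_⟩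
      · simpa using congrFun h 0
      · funext n
        simp only [Function.iterate_succ_apply]; rw [show f x = y from hxy]
    · refine ⟨fun h => hc x y ⟨hne, Or.inr hyx⟩ ?_, Or.inr ?_⟩
      · simpa using congrFun h 0
      · funext n
        simp only [Function.iterate_succ_apply]; rw [show f y = x from hyx]
end

section
/- Let s be a dense thread and let G_s be the associated graph on Cantor space 2^ω. Then every subset A ⊆ 2^ω that has the Baire property and is G_s-independent (contains no pair of adjacent vertices) is meagre. -/
open MeasureTheory

/-- A dense thread: `s k` codes (by its first `k` bits) a binary string of
length `k`, and every finite binary string is a prefix of some `s k`. -/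
def DenseThread (s : ℕ → ℕ → Bool) : Prop :=
  ∀ (m : ℕ) (t : ℕ → Bool), ∃ k, m ≤ k ∧ ∀ i < m, s k i = t i

/-- Adjacency in the graph `G_s` associated to a dense thread `s`. -/
def GsAdj (s : ℕ → ℕ → Bool) (a b : ℕ → Bool) : Prop :=
  a ≠ b ∧ ∃ k, (∀ i < k, a i = s k i) ∧ (∀ i < k, b i = s k i) ∧
    a k ≠ b k ∧ ∀ i > k, a i = b i

/-- Every `G_s`-independent set with the Baire property is meagre. -/
theorem Gs_independent_baire_set_is_meagre
    (s : ℕ → ℕ → Bool) (hs : DenseThread s)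
    (A : Set (ℕ → Bool)) (hA : BaireMeasurableSet A)
    (hind : ∀ a ∈ A, ∀ b ∈ A, ¬GsAdj s a b) :
    IsMeagre A := by
  obtain ⟨U, hUo, hUA⟩ := hA.residualEq_isOpen
  -- the agreement set is residual
  have hagree : {x : ℕ → Bool | (x ∈ A) = (x ∈ U)} ∈ residual _ := hUA
  rcases U.eq_empty_or_nonempty with rfl | ⟨x, hxU⟩
  · -- A =ᵇ ∅, so A is meagre
    refine Filter.mem_of_superset hagree fun y hy => ?_
    simp only [Set.mem_setOf_eq, Set.mem_empty_iff_false, eq_iff_iff, iff_false] at hy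
    exact hy
  · exfalso
    -- find a basic cylinder around x inside U
    obtain ⟨I, u, hu, hpi⟩ := isOpen_pi_iff.mp hUo x hxU
    set m : ℕ := I.sup id + 1 with hm
    obtain ⟨k, hmk, hsk⟩ := hs m x
    set C : Set (ℕ → Bool) := {y | ∀ i < k, y i = s k i} with hC
    have hCo : IsOpen C := by
      have : C = ⋂ i ∈ Finset.range k, {y : ℕ → Bool | y i = s k i} := by
        ext y; simp [hC, Finset.mem_range]
      rw [this]
      refine isOpen_biInter_finset fun i _ => ?_
      have : {y : ℕ → Bool | y i = s k i} = (fun y : ℕ → Bool => y i) ⁻¹' {s k i} := rfl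
      rw [this]
      exact IsOpen.preimage (continuous_apply i) (isOpen_discrete _)
    have hCne : C.Nonempty := ⟨s k, fun i _ => rfl⟩
    have hCU : C ⊆ U := by
      intro y hy
      apply hpi
      intro i hi
      have hilt : i < m := Nat.lt_succ_of_le (Finset.le_sup (f := id) hi)
      have : y i = x i := by
        rw [hy i (lt_of_lt_of_le hilt hmk), hsk i hilt]
      rw [this]
      exact (hu i hi).2
    -- the flip homeomorphism at coordinate k
    set φ : (ℕ → Bool) → (ℕ → Bool) := fun a i => if i = k then !(a k) else a i with hφ
    have hφφ : ∀ a, φ (φ a) = a := by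
      intro a; funext i
      by_cases h : i = k <;> simp [hφ, h]
    have hφc : Continuous φ := by
      refine continuous_pi fun i => ?_
      by_cases h : i = k
      · simp only [hφ, h, if_pos rfl]
        exact Continuous.comp (continuous_of_discreteTopology (f := fun b : Bool => !b)) (continuous_apply k)
      · simp only [hφ, h, if_neg h]
        exact continuous_apply i
    have hφopen : IsOpenMap φ := by
      intro V hV
      have : φ '' V = φ ⁻¹' V := by
        ext y
        constructor
        · rintro ⟨z, hz, rfl⟩; rwa [Set.mem_preimage, hφφ]
        · intro hy; exact ⟨φ y, hy, hφφ y⟩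
      rw [this]
      exact hV.preimage hφc
    -- meagreness of C \ A and its flip preimage
    have h1 : IsMeagre (U \ A) := by
      refine Filter.mem_of_superset hagree fun y hy => ?_
      simp only [Set.mem_setOf_eq, eq_iff_iff] at hy
      intro hyd
      exact hyd.2 (hy.mpr hyd.1)
    have h2 : IsMeagre (C \ A) := h1.mono (Set.diff_subset_diff_left hCU)
    have h3 : IsMeagre (φ ⁻¹' (C \ A)) := h2.preimage_of_isOpenMap hφc hφopen
    -- C is not meagre
    have hCnm : ¬ C ⊆ (C \ A) ∪ φ ⁻¹' (C \ A) := by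
      intro hsub
      have hun : IsMeagre ((C \ A) ∪ φ ⁻¹' (C \ A)) := by
        rw [IsMeagre, Set.compl_union]
        exact Filter.inter_mem h2 h3
      have hmeag : IsMeagre C := hun.mono hsub
      have : Dense Cᶜ := dense_of_mem_residual hmeag
      obtain ⟨y, hy1, hy2⟩ := this.inter_open_nonempty C hCo hCne
      exact hy2 hy1
    obtain ⟨a, haC, haN⟩ := Set.not_subset.mp hCnm
    simp only [Set.mem_union, Set.mem_preimage, Set.mem_diff, not_or, not_and, not_not] at haN
    have haA : a ∈ A := haN.1 haC
    have hφaC : φ a ∈ C := by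
      intro i hik
      have : i ≠ k := Nat.ne_of_lt hik
      simp only [hφ, if_neg this]
      exact haC i hik
    have hφaA : φ a ∈ A := haN.2 hφaC
    -- a and φ a are adjacent
    refine hind a haA (φ a) hφaA ⟨?_, k, haC, hφaC, ?_, ?_⟩
    · intro h
      have := congrFun h k
      simp [hφ] at this
    · simp [hφ]
    · intro i hik
      have : i ≠ k := Nat.ne_of_gt hik
      simp [hφ, this]
end

section
/- Let s be a dense thread. Then there is no proper coloring of the graph G_s with countably many colors in which every color class has the Baire property. In particular, G_s admits no proper coloring with countably many Borel color classes, i.e. the Borel chromatic number of G_s is uncountable. -/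
open MeasureTheory

/-!
Some colour class `A` is nonmeagre, and having the Baire property it is comeagre in a nonempty
open set `U`. By density of the thread, `U` contains a cylinder `[s k]`. Flipping the `k`-th bit
is a homeomorphism of `[s k]` onto itself, so a generic `y ∈ [s k]` has both `y` and its flip in
`A`; but these two points are adjacent in `G_s`.
-/

open Set PiNat

section Baire

variable {X : Type*} [TopologicalSpace X]

theorem exists_not_isMeagre_preimage_singleton [BaireSpace X] [Nonempty X] {ι : Type*}
    [Countable ι] (c : X → ι) : ∃ n, ¬IsMeagre (c ⁻¹' {n}) := by
  by_contra! h
  have hcover : (⋃ n, c ⁻¹' {n}) = univ := by ext x; simp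
  exact not_isMeagre_of_isOpen isOpen_univ univ_nonempty (hcover ▸ isMeagre_iUnion h)

theorem BaireMeasurableSet.exists_isOpen_nonempty_isMeagre_diff {A : Set X}
    (hA : BaireMeasurableSet A) (hnm : ¬IsMeagre A) :
    ∃ U, IsOpen U ∧ U.Nonempty ∧ IsMeagre (U \ A) := by
  obtain ⟨U, hU, hAeqU⟩ := hA.residualEq_isOpen
  have hdiff : ∀ᶠ x in residual X, x ∈ A ↔ x ∈ U := Filter.eventuallyEq_set.mp hAeqU
  have hUA : IsMeagre (U \ A) := hdiff.mono fun x hx hx' => hx'.2 (hx.mpr hx'.1)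
  have hAU : IsMeagre (A \ U) := hdiff.mono fun x hx hx' => hx'.2 (hx.mp hx'.1)
  refine ⟨U, hU, nonempty_of_not_isMeagre fun hUm => hnm ?_, hUA⟩
  exact (hAU.union hUm).mono fun x hx => by by_cases x ∈ U <;> simp_all

theorem exists_mem_and_apply_mem_of_isMeagre_diff [BaireSpace X] (φ : X ≃ₜ X) {U A : Set X}
    (hU : IsOpen U) (hne : U.Nonempty) (hφ : MapsTo φ U U) (hUA : IsMeagre (U \ A)) :
    ∃ y ∈ U, y ∈ A ∧ φ y ∈ A := by
  have hbad : IsMeagre (U \ A ∪ φ ⁻¹' (U \ A)) :=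
    hUA.union (hUA.preimage_of_isOpenMap φ.continuous φ.isOpenMap)
  obtain ⟨y, hyU, hy⟩ := (dense_of_mem_residual hbad).inter_open_nonempty U hU hne
  simp only [mem_compl_iff, mem_union, mem_preimage, mem_sdiff, not_or, not_and, not_not] at hy
  exact ⟨y, hyU, hy.1 hyU, hy.2 (hφ hyU)⟩

end Baire

theorem DenseThread.exists_cylinder_subset {s : ℕ → ℕ → Bool} (hs : DenseThread s)
    {U : Set (ℕ → Bool)} (hU : IsOpen U) (hne : U.Nonempty) :
    ∃ k, cylinder (s k) k ⊆ U := by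
  obtain ⟨x, hx⟩ := hne
  obtain ⟨-, ⟨x', m, rfl⟩, hxm, hmU⟩ :=
    (isTopologicalBasis_cylinders fun _ => Bool).exists_subset_of_mem_open hx hU
  obtain ⟨k, hmk, hsk⟩ := hs m x
  have hskm : cylinder (s k) m = cylinder x' m :=
    (mem_cylinder_iff_eq.mp hsk).trans (mem_cylinder_iff_eq.mp hxm)
  exact ⟨k, (cylinder_anti _ hmk).trans (hskm ▸ hmU)⟩

def flipAt (k : ℕ) : (ℕ → Bool) ≃ₜ (ℕ → Bool) where
  toFun y := Function.update y k (!y k)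
  invFun y := Function.update y k (!y k)
  left_inv y := by simp
  right_inv y := by simp
  continuous_toFun :=
    continuous_id.update k ((continuous_of_discreteTopology (f := not)).comp (continuous_apply k))
  continuous_invFun :=
    continuous_id.update k ((continuous_of_discreteTopology (f := not)).comp (continuous_apply k))

theorem flipAt_apply (k : ℕ) (y : ℕ → Bool) : flipAt k y = Function.update y k (!y k) := by
  rfl

theorem flipAt_mapsTo_cylinder (k : ℕ) (x : ℕ → Bool) :
    MapsTo (flipAt k) (cylinder x k) (cylinder x k) := fun y hy i hi => by
  simpa [flipAt_apply, Function.update_of_ne hi.ne] using hy i hi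

theorem gsAdj_flipAt {s : ℕ → ℕ → Bool} {k : ℕ} {y : ℕ → Bool} (hy : y ∈ cylinder (s k) k) :
    GsAdj s y (flipAt k y) := by
  have hk : y k ≠ flipAt k y k := by simp [flipAt_apply]
  refine ⟨fun h => hk (congrFun h k), k, hy, flipAt_mapsTo_cylinder k _ hy, hk, ?_⟩
  intro i hi
  simp [flipAt_apply, Function.update_of_ne hi.ne']

theorem DenseThread.not_exists_baireMeasurable_coloring {s : ℕ → ℕ → Bool}
    (hs : DenseThread s) :
    ¬∃ c : (ℕ → Bool) → ℕ, (∀ a b, GsAdj s a b → c a ≠ c b) ∧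
        ∀ n, BaireMeasurableSet (c ⁻¹' {n}) := by
  rintro ⟨c, hc, hbp⟩
  obtain ⟨n, hn⟩ := exists_not_isMeagre_preimage_singleton c
  obtain ⟨U, hU, hUne, hUA⟩ := (hbp n).exists_isOpen_nonempty_isMeagre_diff hn
  obtain ⟨k, hkU⟩ := hs.exists_cylinder_subset hU hUne
  obtain ⟨y, hy, hyA, hφyA⟩ := exists_mem_and_apply_mem_of_isMeagre_diff (flipAt k)
    (isOpen_cylinder _ _ _) ⟨s k, self_mem_cylinder _ _⟩ (flipAt_mapsTo_cylinder k _)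
    (hUA.mono (sdiff_subset_sdiff_left hkU))
  exact hc _ _ (gsAdj_flipAt hy) (hyA.trans hφyA.symm)

/-- `G_s` admits no proper colouring with countably many colours whose colour
classes all have the Baire property; in particular its Borel chromatic number
is uncountable. -/
theorem Gs_chromatic_number_uncountable
    (s : ℕ → ℕ → Bool) (hs : DenseThread s) :
    (¬∃ c : (ℕ → Bool) → ℕ, (∀ a b, GsAdj s a b → c a ≠ c b) ∧
        ∀ n, BaireMeasurableSet (c ⁻¹' {n})) ∧
    (¬∃ c : (ℕ → Bool) → ℕ, (∀ a b, GsAdj s a b → c a ≠ c b) ∧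
        ∀ n, MeasurableSet (c ⁻¹' {n})) :=
  ⟨hs.not_exists_baireMeasurable_coloring, fun ⟨c, hc, hmeas⟩ =>
    hs.not_exists_baireMeasurable_coloring ⟨c, hc, fun n => (hmeas n).baireMeasurableSet⟩⟩
end
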